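/- Let x ∈ ℝʳ have all coordinates nonzero with at least two consecutive coordinates sharing a sign, and let A be an r×r matrix that is TP_{r−1}. Then S⁺(Ax) ≤ S⁻(x). -/
import Mathlib


open Matrix

/-- `S⁻(x)`: the number of sign changes of `x` after deleting its zero entries. -/
noncomputable def Sminus {n : ℕ} (x : Fin n → ℝ) : ℕ :=
  sSup {m | ∃ f : Fin (m + 1) → Fin n, StrictMono f ∧
    ∀ i : Fin m, x (f i.castSucc) * x (f i.succ) < 0}

open Classical in
/-- `S⁺(x)`: the maximal number of sign changes obtainable by replacing the zero entries of
`x` by nonzero values, with the convention `S⁺(0) = n`. -/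
noncomputable def Splus {n : ℕ} (x : Fin n → ℝ) : ℕ :=
  if x = 0 then n
  else sSup {m | ∃ y : Fin n → ℝ, (∀ i, y i ≠ 0) ∧ (∀ i, x i ≠ 0 → y i = x i) ∧ m = Sminus y}

section AuxLemmas

lemma opp_sign_aux {X0 e u v : ℝ} (h1 : 0 < X0 * (e * u)) (h2 : 0 < X0 * (e * -1 * v)) :
    u * v < 0 := by
  have h2' : X0 * (e * v) < 0 := by nlinarith
  nlinarith [mul_neg_of_pos_of_neg h1 h2', sq_nonneg (X0 * e)]

lemma step_neg_aux {X0 e u v : ℝ} (h1 : 0 < X0 * (e * u)) (hc : u * v < 0) :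
    0 < X0 * (e * -1 * v) := by
  nlinarith [mul_neg_of_pos_of_neg h1 hc, sq_nonneg u]

lemma step_pos_aux {X0 e u v : ℝ} (h1 : 0 < X0 * (e * u)) (hc : 0 < u * v) :
    0 < X0 * (e * v) := by
  nlinarith [mul_pos h1 hc, sq_nonneg u]

lemma det_blocks_pos {r p : ℕ} (A : Matrix (Fin r) (Fin r) ℝ)
    (hTP : ∀ (f g : Fin p → Fin r), StrictMono f → StrictMono g → 0 < (A.submatrix f g).det)
    (f : Fin p → Fin r) (hf : StrictMono f)
    (S : Fin p → Finset (Fin r)) (hS : ∀ t, (S t).Nonempty)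
    (c : Fin r → ℝ) (hc : ∀ t, ∀ j ∈ S t, 0 < c j)
    (hord : ∀ t t' : Fin p, t < t' → ∀ j ∈ S t, ∀ j' ∈ S t', j < j') :
    0 < (Matrix.of fun (t i : Fin p) => ∑ j ∈ S t, c j * A (f i) j).det := by
  classical
  have hrow : (Matrix.of fun (t i : Fin p) => ∑ j ∈ S t, c j * A (f i) j)
      = fun t => ∑ j ∈ S t, c j • (fun i => A (f i) j) := by
    funext t
    funext i
    simp [Finset.sum_apply]
  have h1 : (Matrix.of fun (t i : Fin p) => ∑ j ∈ S t, c j * A (f i) j).det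
      = ∑ ρ ∈ Fintype.piFinset S, (∏ t, c (ρ t)) * (A.submatrix f ρ).det := by
    show Matrix.detRowAlternating _ = _
    rw [hrow]
    have key : (Matrix.detRowAlternating (n := Fin p) (R := ℝ))
          (fun t => ∑ j ∈ S t, c j • fun i => A (f i) j)
        = ∑ ρ ∈ Fintype.piFinset S, (Matrix.detRowAlternating (n := Fin p) (R := ℝ))
            (fun t => c (ρ t) • fun i => A (f i) (ρ t)) :=
      (Matrix.detRowAlternating (n := Fin p) (R := ℝ)).toMultilinearMap.map_sum_finset
        (g := fun t (j : Fin r) => c j • fun i => A (f i) j) (A := S)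
    rw [key]
    refine Finset.sum_congr rfl fun ρ _ => ?_
    have key2 : (Matrix.detRowAlternating (n := Fin p) (R := ℝ))
          (fun t => c (ρ t) • fun i => A (f i) (ρ t))
        = (∏ t, c (ρ t)) • (Matrix.detRowAlternating (n := Fin p) (R := ℝ))
            (fun t => fun i => A (f i) (ρ t)) :=
      (Matrix.detRowAlternating (n := Fin p) (R := ℝ)).toMultilinearMap.map_smul_univ
        (fun t => c (ρ t)) (fun t => fun i => A (f i) (ρ t))
    rw [key2]
    have : Matrix.detRowAlternating (fun t (i : Fin p) => A (f i) (ρ t))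
        = (A.submatrix f ρ).det := by
      rw [show (fun t (i : Fin p) => A (f i) (ρ t)) = (A.submatrix f ρ)ᵀ from rfl]
      exact Matrix.det_transpose _
    rw [this]
    simp
  rw [h1]
  apply Finset.sum_pos
  · intro ρ hρ
    have hmem : ∀ t, ρ t ∈ S t := by
      intro t
      exact Fintype.mem_piFinset.mp hρ t
    have hρmono : StrictMono ρ := fun t t' htt =>
      hord t t' htt _ (hmem t) _ (hmem t')
    exact mul_pos (Finset.prod_pos fun t _ => hc t _ (hmem t)) (hTP f ρ hf hρmono)
  · exact Fintype.piFinset_nonempty.mpr hS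

lemma alt_vanish {k : ℕ} (N : Matrix (Fin (k+2)) (Fin (k+1)) ℝ)
    (hminor : ∀ i : Fin (k+2), 0 < ((N.submatrix i.succAbove id)).det)
    (σ : ℝ) (hσ : σ ≠ 0)
    (hsign : ∀ i : Fin (k+2), 0 ≤ σ * (-1)^(i:ℕ) * (∑ t : Fin (k+1), (-1)^(t:ℕ) * N i t)) :
    False := by
  classical
  set v : Fin (k+2) → ℝ := fun i => ∑ t : Fin (k+1), (-1)^(t:ℕ) * N i t with hv
  set M : Matrix (Fin (k+2)) (Fin (k+2)) ℝ :=
    Matrix.of fun i (j : Fin (k+2)) => Fin.cases (v i) (fun t => N i t) j with hM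
  set c : Fin (k+2) → ℝ := Fin.cases 0 (fun t => (-1)^(t:ℕ)) with hc
  have hcomb : (fun a => ∑ i, c i • M a i) = fun a => M a 0 := by
    funext a
    rw [Fin.sum_univ_succ]
    simp [c, M, v]
  have hdet0 : M.det = 0 := by
    have h := Matrix.det_updateCol_sum M 0 c
    rw [show (fun a => ∑ i, c i • M a i) = fun a => M a 0 from hcomb] at h
    rw [Matrix.updateCol_eq_self] at h
    simpa [c] using h
  have hexp := Matrix.det_succ_column_zero M
  rw [hdet0] at hexp
  have hsub : ∀ i : Fin (k+2), M.submatrix i.succAbove Fin.succ = N.submatrix i.succAbove id := by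
    intro i; ext a b; simp [M]
  have hM0 : ∀ i : Fin (k+2), M i 0 = v i := by intro i; simp [M]
  have hterm : ∀ i : Fin (k+2),
      0 ≤ σ * ((-1)^(i:ℕ) * M i 0 * (M.submatrix i.succAbove Fin.succ).det) := by
    intro i
    rw [hsub i, hM0 i]
    have h1 := hsign i
    have h2 := (hminor i).le
    calc (0:ℝ) = (σ * (-1)^(i:ℕ) * v i) * 0 := by ring
    _ ≤ (σ * (-1)^(i:ℕ) * v i) * (N.submatrix i.succAbove id).det :=
        mul_le_mul_of_nonneg_left h2 h1
    _ = σ * ((-1)^(i:ℕ) * v i * (N.submatrix i.succAbove id).det) := by ring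
  have hall : ∀ i : Fin (k+2), i ∈ Finset.univ →
      σ * ((-1)^(i:ℕ) * M i 0 * (M.submatrix i.succAbove Fin.succ).det) = 0 := by
    have hsum : ∑ i : Fin (k+2),
        σ * ((-1)^(i:ℕ) * M i 0 * (M.submatrix i.succAbove Fin.succ).det) = 0 := by
      rw [← Finset.mul_sum, ← hexp, mul_zero]
    exact (Finset.sum_eq_zero_iff_of_nonneg (fun i _ => hterm i)).mp hsum
  have hv0 : ∀ i : Fin (k+2), v i = 0 := by
    intro i
    have h := hall i (Finset.mem_univ i)
    rw [hsub i, hM0 i] at h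
    have hd := (hminor i).ne'
    have hpow : ((-1:ℝ))^(i:ℕ) ≠ 0 := by
      intro hcon
      have := pow_ne_zero (i:ℕ) (by norm_num : (-1:ℝ) ≠ 0)
      exact this hcon
    rcases mul_eq_zero.mp h with h' | h'
    · exact absurd h' hσ
    · rcases mul_eq_zero.mp h' with h'' | h''
      · rcases mul_eq_zero.mp h'' with h3 | h3
        · exact absurd h3 hpow
        · exact h3
      · exact absurd h'' hd
  set Q : Matrix (Fin (k+1)) (Fin (k+1)) ℝ := N.submatrix (Fin.last (k+1)).succAbove id with hQ
  have hQdet : Q.det ≠ 0 := (hminor (Fin.last (k+1))).ne'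
  have hmul : Q.mulVec (fun t => (-1)^(t:ℕ)) = 0 := by
    funext a
    have hva := hv0 ((Fin.last (k+1)).succAbove a)
    simp only [v] at hva
    simp only [Pi.zero_apply]
    rw [show Q.mulVec (fun t => (-1)^(t:ℕ)) a
        = ∑ t : Fin (k+1), Q a t * (-1)^(t:ℕ) from rfl]
    rw [← hva]
    apply Finset.sum_congr rfl
    intro t _
    simp only [Q, Matrix.submatrix_apply, id]
    ring
  have := Matrix.eq_zero_of_mulVec_eq_zero hQdet hmul
  have h0 := congrFun this 0
  simp at h0

end AuxLemmas


/-- If `x ∈ ℝʳ` has all coordinates nonzero with at least two consecutive coordinates of the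
same sign, and `A` is `TP_{r-1}`, then `S⁺(Ax) ≤ S⁻(x)`. -/
theorem stmt17 {r : ℕ} (x : Fin r → ℝ) (hx0 : ∀ i, x i ≠ 0)
    (hsame : ∃ i : ℕ, ∃ h : i + 1 < r, 0 < x ⟨i, by omega⟩ * x ⟨i + 1, h⟩)
    (A : Matrix (Fin r) (Fin r) ℝ)
    (hTP : ∀ p : ℕ, p < r → ∀ (f g : Fin p → Fin r), StrictMono f → StrictMono g →
      0 < (A.submatrix f g).det) :
    Splus (A.mulVec x) ≤ Sminus x := by
  classical
  obtain ⟨i₀, hi₀r, hi₀⟩ := hsame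
  have hr2 : 2 ≤ r := by omega
  -- extension of x to ℕ
  set X : ℕ → ℝ := fun j => if h : j < r then x ⟨j, h⟩ else 1 with hXdef
  have hXx : ∀ (j : ℕ) (h : j < r), X j = x ⟨j, h⟩ := fun j h => dif_pos h
  have hXne : ∀ j, j < r → X j ≠ 0 := fun j hj => by rw [hXx j hj]; exact hx0 _
  have hX0ne : X 0 ≠ 0 := hXne 0 (by omega)
  -- counting sign changes
  set b : ℕ → ℕ := fun i => ((Finset.range i).filter (fun j => X j * X (j+1) < 0)).card
    with hbdef
  have hbmono : Monotone b := fun i i' h =>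
    Finset.card_le_card (Finset.filter_subset_filter _ (Finset.range_subset_range.mpr h))
  have hb0 : b 0 = 0 := by simp [hbdef]
  have hbstep : ∀ n, b (n+1) = b n + (if X n * X (n+1) < 0 then 1 else 0) := by
    intro n
    simp only [hbdef]
    rw [Finset.range_add_one, Finset.filter_insert]
    by_cases hcn : X n * X (n+1) < 0
    · rw [if_pos hcn, if_pos hcn,
        Finset.card_insert_of_notMem (fun hmem => by
          simpa using Finset.mem_of_mem_filter n hmem)]
    · rw [if_neg hcn, if_neg hcn, add_zero]
  -- the key sign lemma
  have hsgn : ∀ i, i < r → 0 < X 0 * ((-1)^(b i) * X i) := by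
    intro i
    induction i with
    | zero =>
      intro h
      rw [hb0, pow_zero, one_mul]
      exact mul_self_pos.mpr hX0ne
    | succ n ih =>
      intro h
      have hn : n < r := by omega
      have h1 := ih hn
      have hprod_ne : X n * X (n+1) ≠ 0 := mul_ne_zero (hXne n hn) (hXne _ h)
      rw [hbstep n]
      by_cases hcn : X n * X (n+1) < 0
      · rw [if_pos hcn, pow_succ]
        exact step_neg_aux h1 hcn
      · have hc' : 0 < X n * X (n+1) := lt_of_le_of_ne (not_lt.mp hcn) (Ne.symm hprod_ne)
        rw [if_neg hcn, add_zero]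
        exact step_pos_aux h1 hc'
  set K : ℕ := b (r-1) with hKdef
  -- K + 2 ≤ r
  have hnotchg : ¬ (X i₀ * X (i₀+1) < 0) := by
    rw [hXx i₀ (by omega), hXx (i₀+1) hi₀r]
    exact not_lt.mpr (le_of_lt hi₀)
  have hKr : K + 2 ≤ r := by
    have hsub : (Finset.range (r-1)).filter (fun j => X j * X (j+1) < 0)
        ⊆ (Finset.range (r-1)).erase i₀ := by
      intro j hj
      rw [Finset.mem_erase]
      rw [Finset.mem_filter] at hj
      refine ⟨?_, hj.1⟩
      rintro rfl
      exact hnotchg hj.2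
    have hcard := Finset.card_le_card hsub
    have hi₀mem : i₀ ∈ Finset.range (r-1) := Finset.mem_range.mpr (by omega)
    have herase := Finset.card_erase_of_mem hi₀mem
    have hcr : (Finset.range (r-1)).card = r - 1 := Finset.card_range _
    have hK : K = ((Finset.range (r-1)).filter (fun j => X j * X (j+1) < 0)).card := rfl
    omega
  -- b attains every value up to b i
  have hbreach : ∀ i, ∀ t ≤ b i, ∃ j ≤ i, b j = t := by
    intro i
    induction i with
    | zero =>
      intro t ht
      exact ⟨0, le_refl 0, by omega⟩
    | succ n ih =>
      intro t ht
      by_cases hle : t ≤ b n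
      · obtain ⟨j, hj, hjt⟩ := ih t hle
        exact ⟨j, by omega, hjt⟩
      · have hstep : b (n+1) ≤ b n + 1 := by rw [hbstep n]; split <;> omega
        exact ⟨n+1, le_refl _, by omega⟩
  -- blocks
  have hbK : ∀ j : Fin r, b j.val ≤ K := fun j => by
    have := hbmono (show j.val ≤ r - 1 by omega)
    omega
  set φ : Fin r → Fin (K+1) := fun j => ⟨b j.val, by have := hbK j; omega⟩ with hφdef
  set S : Fin (K+1) → Finset (Fin r) := fun t => Finset.univ.filter (fun j => φ j = t)
    with hSdef
  have hSmem : ∀ (t : Fin (K+1)) (j : Fin r), j ∈ S t ↔ b j.val = t.val := by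
    intro t j
    simp [hSdef, hφdef, Fin.ext_iff]
  have hSne : ∀ t, (S t).Nonempty := by
    intro t
    obtain ⟨j, hj, hjt⟩ := hbreach (r-1) t.val (by have := t.isLt; omega)
    exact ⟨⟨j, by omega⟩, (hSmem t _).mpr hjt⟩
  have hord : ∀ t t' : Fin (K+1), t < t' → ∀ j ∈ S t, ∀ j' ∈ S t', j < j' := by
    intro t t' htt j hj j' hj'
    rw [hSmem] at hj hj'
    by_contra hle
    push_neg at hle
    have hmm := hbmono (show j'.val ≤ j.val from hle)
    rw [hj, hj'] at hmm
    rw [Fin.lt_def] at htt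
    omega
  -- coefficients
  set c : Fin r → ℝ := fun j => X 0 * ((-1)^(b j.val) * X j.val) with hcdef
  have hcpos : ∀ j : Fin r, 0 < c j := fun j => hsgn j.val j.isLt
  set B : Matrix (Fin r) (Fin (K+1)) ℝ := Matrix.of (fun i t => ∑ j ∈ S t, c j * A i j)
    with hBdef
  -- decomposition of A * x along the blocks
  have hdecomp : ∀ i : Fin r, ∑ t : Fin (K+1), (-1)^(t:ℕ) * B i t
      = X 0 * (A.mulVec x) i := by
    intro i
    have h1 : ∀ t : Fin (K+1), (-1:ℝ)^(t:ℕ) * B i t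
        = ∑ j ∈ Finset.univ.filter (fun j => φ j = t), X 0 * x j * A i j := by
      intro t
      rw [show B i t = ∑ j ∈ S t, c j * A i j from rfl]
      rw [Finset.mul_sum]
      rw [show (S t : Finset (Fin r)) = Finset.univ.filter (fun j => φ j = t) from rfl]
      apply Finset.sum_congr rfl
      intro j hj
      have hjb : b j.val = t.val := (hSmem t j).mp hj
      have he2 : ((-1:ℝ))^(b j.val) * (-1:ℝ)^(b j.val) = 1 := by
        rw [← mul_pow]; norm_num
      have hXj : X j.val = x j := by
        rw [hXx j.val j.isLt]
      rw [← mul_assoc]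
      rw [show ((-1:ℝ))^(t:ℕ) * c j = X 0 * x j from by
        have hcj : c j = X 0 * ((-1)^(b j.val) * X j.val) := rfl
        rw [hcj, hXj, ← hjb]
        linear_combination (X 0 * x j) * he2]
    calc ∑ t : Fin (K+1), (-1)^(t:ℕ) * B i t
        = ∑ t : Fin (K+1), ∑ j ∈ Finset.univ.filter (fun j => φ j = t),
            X 0 * x j * A i j := Finset.sum_congr rfl (fun t _ => h1 t)
      _ = ∑ j : Fin r, X 0 * x j * A i j := Finset.sum_fiberwise _ _ _
      _ = X 0 * (A.mulVec x) i := by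
          rw [show (A.mulVec x) i = ∑ j, A i j * x j from rfl, Finset.mul_sum]
          apply Finset.sum_congr rfl
          intro j _
          ring
  -- positivity of the minors of B
  have hminorB : ∀ (f : Fin (K+1) → Fin r), StrictMono f → 0 < ((B.submatrix f id)).det := by
    intro f hf
    rw [← Matrix.det_transpose]
    rw [show (B.submatrix f id)ᵀ
        = Matrix.of (fun (t i : Fin (K+1)) => ∑ j ∈ S t, c j * A (f i) j) from rfl]
    exact det_blocks_pos A (fun f' g' hf' hg' => hTP (K+1) (by omega) f' g' hf' hg') f hf
      S hSne c (fun t j hj => hcpos j) hord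
  -- choose block representatives
  choose g hg using fun t => hSne t
  have hgmono : StrictMono g := fun t t' htt => hord t t' htt _ (hg t) _ (hg t')
  have hbg : ∀ t, b (g t).val = t.val := fun t => (hSmem _ _).mp (hg t)
  -- K ≤ Sminus x
  have hbdd : BddAbove {m | ∃ f : Fin (m + 1) → Fin r, StrictMono f ∧
      ∀ i : Fin m, x (f i.castSucc) * x (f i.succ) < 0} := by
    refine ⟨r, ?_⟩
    rintro m ⟨f, hf, -⟩
    have hcard := Fintype.card_le_of_injective f hf.injective
    simp only [Fintype.card_fin] at hcard
    omega
  have hKmem : K ∈ {m | ∃ f : Fin (m + 1) → Fin r, StrictMono f ∧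
      ∀ i : Fin m, x (f i.castSucc) * x (f i.succ) < 0} := by
    refine ⟨g, hgmono, ?_⟩
    intro i
    have h1 := hsgn (g i.castSucc).val (g i.castSucc).isLt
    have h2 := hsgn (g i.succ).val (g i.succ).isLt
    rw [hbg i.castSucc, Fin.coe_castSucc] at h1
    rw [hbg i.succ, Fin.val_succ, pow_succ] at h2
    rw [hXx _ (g i.castSucc).isLt] at h1
    rw [hXx _ (g i.succ).isLt] at h2
    rw [Fin.eta] at h1
    rw [Fin.eta] at h2
    exact opp_sign_aux h1 h2
  have hKS : K ≤ Sminus x := le_csSup hbdd hKmem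
  -- A * x is nonzero
  have hAx0 : A.mulVec x ≠ 0 := by
    intro h0
    have hQ := hminorB g hgmono
    have hmul : (B.submatrix g id).mulVec (fun t => (-1)^(t:ℕ)) = 0 := by
      funext a
      simp only [Pi.zero_apply]
      show (∑ t : Fin (K+1), B.submatrix g id a t * (-1)^(t:ℕ)) = 0
      calc ∑ t : Fin (K+1), B.submatrix g id a t * (-1)^(t:ℕ)
          = ∑ t : Fin (K+1), (-1)^(t:ℕ) * B (g a) t := by
            apply Finset.sum_congr rfl
            intro t _
            rw [Matrix.submatrix_apply, id]
            ring
        _ = X 0 * (A.mulVec x) (g a) := hdecomp (g a)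
        _ = 0 := by rw [h0]; simp
    have hzero := Matrix.eq_zero_of_mulVec_eq_zero hQ.ne' hmul
    have h1 := congrFun hzero 0
    simp at h1
  -- main bound
  rw [Splus, if_neg hAx0]
  apply csSup_le'
  rintro m ⟨y, hyne, hyagree, rfl⟩
  have hSy : Sminus y ≤ K := by
    apply csSup_le'
    rintro m' ⟨F, hF, hFs⟩
    by_contra hgt
    push_neg at hgt
    -- restrict F to the first K+2 indices
    have hcast : (K+2) ≤ m'+1 := by omega
    set F' : Fin (K+2) → Fin r := fun i => F (Fin.castLE hcast i) with hF'def
    have hF'mono : StrictMono F' := by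
      rw [hF'def]
      exact hF.comp (Fin.strictMono_castLE hcast)
    have hF'sign : ∀ i : Fin (K+1), y (F' i.castSucc) * y (F' i.succ) < 0 := by
      intro i
      have hi : (i : ℕ) < m' := by omega
      have hFi := hFs ⟨i, hi⟩
      have e1 : Fin.castLE hcast i.castSucc = (⟨i, hi⟩ : Fin m').castSucc := by
        ext
        simp
      have e2 : Fin.castLE hcast i.succ = (⟨i, hi⟩ : Fin m').succ := by
        ext
        simp
      show y (F (Fin.castLE hcast i.castSucc)) * y (F (Fin.castLE hcast i.succ)) < 0
      rw [e1, e2]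
      exact hFi
    -- alternation of y along F'
    have halt : ∀ n (hn : n < K+2), 0 < y (F' 0) * ((-1)^n * y (F' ⟨n, hn⟩)) := by
      intro n
      induction n with
      | zero =>
        intro hn
        rw [pow_zero, one_mul]
        exact mul_self_pos.mpr (hyne (F' 0))
      | succ n ih =>
        intro hn
        have h1 := ih (by omega)
        have hcs := hF'sign ⟨n, by omega⟩
        rw [pow_succ]
        have e1 : (⟨n, by omega⟩ : Fin (K+1)).castSucc = (⟨n, by omega⟩ : Fin (K+2)) := by
          ext; simp
        have e2 : (⟨n, by omega⟩ : Fin (K+1)).succ = (⟨n+1, hn⟩ : Fin (K+2)) := by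
          ext; simp
        rw [e1, e2] at hcs
        exact step_neg_aux h1 hcs
    -- set up the contradiction
    set N : Matrix (Fin (K+2)) (Fin (K+1)) ℝ := Matrix.of fun i t => B (F' i) t with hNdef
    have hminors : ∀ i : Fin (K+2), 0 < ((N.submatrix i.succAbove id)).det := by
      intro i
      exact hminorB (F' ∘ i.succAbove) (hF'mono.comp (Fin.strictMono_succAbove i))
    apply alt_vanish N hminors (y (F' 0) * X 0) (mul_ne_zero (hyne _) hX0ne)
    intro i
    have hveq : ∑ t : Fin (K+1), (-1)^(t:ℕ) * N i t = X 0 * (A.mulVec x) (F' i) :=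
      hdecomp (F' i)
    rw [hveq]
    by_cases hz : (A.mulVec x) (F' i) = 0
    · rw [hz]
      simp
    · have hyx : y (F' i) = (A.mulVec x) (F' i) := hyagree _ hz
      have hi := halt i.val i.isLt
      rw [Fin.eta] at hi
      rw [← hyx]
      nlinarith [mul_pos (mul_self_pos.mpr hX0ne) hi]
  exact hSy.trans hKS
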